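/- arXiv:2412.13340 — 8 statements merged into one kernel-verified Lean document; each statement's English description precedes it below -/
import Mathlib

section
/- Let n ≥ 1 and let f : Fin n → ℝ → ℝ be density functions, each integrable on [0,1] and nonnegative almost everywhere on [0,1]. Then for every permutation σ of Fin n there exists a cut-set x in the standard (n−1)-simplex such that, writing s_0 = 0 and s_k = x_1 + ⋯ + x_k, the values ∫_{s_{i−1}}^{s_i} f_{σ(i)}(z) dz are equal for all i; i.e., every permutation of an instance with nonnegative additive valuations admits a connected equitable division. -/
/-!
Perturb each valuation by `ε t`: the cumulative value functions
`g i t = ∫ z in 0..t, f i z + ε t` become order isomorphisms of `ℝ`. For a target value `e`, cut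
greedily, `s (k + 1) = (g k)⁻¹ (g k (s k) + e)`; the last cut `s n` depends continuously on `e`,
vanishes at `e = 0` and is at least `1` for `e` large, so by the intermediate value theorem some
`e` gives `s n = 1`, i.e. a division that is equitable up to the terms `ε x i`. Letting `ε → 0`
inside the compact simplex yields an equitable division. Densities on `[0, 1]` are first extended
by zero to `ℝ`.
-/

open MeasureTheory Finset Filter intervalIntegral

theorem IsCompact.exists_mem_apply_zero_mem_of_forall_pos {X Y : Type*} [TopologicalSpace X]
    [TopologicalSpace Y] {K : Set X} (hK : IsCompact K) {D : ℝ × X → Y} (hD : Continuous D)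
    {C : Set Y} (hC : IsClosed C) (h : ∀ ε > 0, ∃ x ∈ K, D (ε, x) ∈ C) :
    ∃ x ∈ K, D (0, x) ∈ C := by
  set S := Set.Icc (0 : ℝ) 1 ×ˢ K ∩ D ⁻¹' C
  have hS : IsCompact S := (isCompact_Icc.prod hK).inter_right (hC.preimage hD)
  have hsub : Set.Ioc (0 : ℝ) 1 ⊆ Prod.fst '' S := by
    rintro ε ⟨hε0, hε1⟩
    obtain ⟨x, hxK, hx⟩ := h ε hε0
    exact ⟨(ε, x), ⟨⟨⟨hε0.le, hε1⟩, hxK⟩, hx⟩, rfl⟩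
  have h0 : (0 : ℝ) ∈ closure (Set.Ioc (0 : ℝ) 1) := by simp [closure_Ioc zero_ne_one]
  obtain ⟨⟨_, x⟩, ⟨⟨-, hxK⟩, hx⟩, rfl⟩ :=
    (hS.image continuous_fst).isClosed.closure_subset_iff.mpr hsub h0
  exact ⟨x, hxK, hx⟩

theorem Monotone.exists_orderIso_add_mul {g : ℝ → ℝ} (hg : Monotone g) (hgc : Continuous g)
    {ε : ℝ} (hε : 0 < ε) : ∃ e : ℝ ≃o ℝ, ∀ t, e t = g t + ε * t := by
  have hsurj : Function.Surjective fun t => g t + ε * t :=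
    (hgc.add (continuous_const.mul continuous_id)).surjective
      (tendsto_atTop_add_left_of_le' _ (g 0) ((eventually_ge_atTop 0).mono fun _ => (hg ·))
        (tendsto_id.const_mul_atTop hε))
      (tendsto_atBot_add_left_of_ge' _ (g 0) ((eventually_le_atBot 0).mono fun _ => (hg ·))
        (tendsto_id.const_mul_atBot hε))
  exact ⟨StrictMono.orderIsoOfSurjective _ (hg.add_strictMono (strictMono_mul_left_of_pos hε))
    hsurj, fun _ => rfl⟩

section CutSeq

variable (g : ℕ → ℝ ≃o ℝ)

noncomputable def cutSeq (e : ℝ) : ℕ → ℝ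
  | 0 => 0
  | k + 1 => (g k).symm (g k (cutSeq e k) + e)

theorem apply_cutSeq_succ_sub (e : ℝ) (k : ℕ) :
    g k (cutSeq g e (k + 1)) - g k (cutSeq g e k) = e := by
  simp [cutSeq]

theorem cutSeq_zero_left (k : ℕ) : cutSeq g 0 k = 0 := by
  induction k with
  | zero => rfl
  | succ k ih => simp [cutSeq, ih]

theorem monotone_cutSeq {e : ℝ} (he : 0 ≤ e) : Monotone (cutSeq g e) :=
  monotone_nat_of_le_succ fun k => by
    simpa [cutSeq, OrderIso.le_symm_apply] using he

theorem continuous_cutSeq (k : ℕ) : Continuous fun e => cutSeq g e k := by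
  induction k with
  | zero => exact continuous_const
  | succ k ih =>
    exact (g k).symm.continuous.comp (((g k).continuous.comp ih).add continuous_id)

theorem exists_cutSeq_eq_one {n : ℕ} (hn : n ≠ 0) : ∃ e, 0 ≤ e ∧ cutSeq g e n = 1 := by
  set E := g 0 1 - g 0 0
  have hE : 0 ≤ E := sub_nonneg.mpr ((g 0).monotone zero_le_one)
  have hE1 : 1 ≤ cutSeq g E n :=
    calc (1 : ℝ) = cutSeq g E 1 := by simp [cutSeq, E]
      _ ≤ cutSeq g E n := monotone_cutSeq g hE (Nat.one_le_iff_ne_zero.mpr hn)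
  obtain ⟨e, he, hes⟩ := intermediate_value_Icc hE (continuous_cutSeq g n).continuousOn
    ⟨(cutSeq_zero_left g n).trans_le zero_le_one, hE1⟩
  exact ⟨e, he.1, hes⟩

end CutSeq

theorem Fin.sum_Iio_sub_succ {M : Type*} [AddCommGroup M] {n : ℕ} (s : ℕ → M) (i : Fin n) :
    ∑ k ∈ Iio i, (s (k + 1) - s k) = s i - s 0 := by
  have h := sum_map (Iio i) Fin.valEmbedding fun k => s (k + 1) - s k
  rw [Fin.map_valEmbedding_Iio, Nat.Iio_eq_range, sum_range_sub] at h
  exact h.symm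

theorem Fin.sum_Iic_sub_succ {M : Type*} [AddCommGroup M] {n : ℕ} (s : ℕ → M) (i : Fin n) :
    ∑ k ∈ Iic i, (s (k + 1) - s k) = s (i + 1) - s 0 := by
  have h := sum_map (Iic i) Fin.valEmbedding fun k => s (k + 1) - s k
  rw [Fin.map_valEmbedding_Iic, ← Nat.range_succ_eq_Iic, sum_range_sub] at h
  exact h.symm

theorem mem_stdSimplex_of_monotone {𝕜 : Type*} [Ring 𝕜] [PartialOrder 𝕜] [IsOrderedRing 𝕜]
    {n : ℕ} {s : ℕ → 𝕜} (hs : Monotone s) (h0 : s 0 = 0) (hn : s n = 1) :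
    (fun i : Fin n => s (i + 1) - s i) ∈ stdSimplex 𝕜 (Fin n) :=
  ⟨fun i => sub_nonneg.mpr (hs (Nat.le_succ i)), by
    rw [Fin.sum_univ_eq_sum_range (fun k => s (k + 1) - s k), sum_range_sub, hn, h0, sub_zero]⟩

theorem sum_mem_Icc_of_mem_stdSimplex {𝕜 ι : Type*} [Semiring 𝕜] [PartialOrder 𝕜]
    [IsOrderedRing 𝕜] [Fintype ι] {x : ι → 𝕜} (hx : x ∈ stdSimplex 𝕜 ι) (t : Finset ι) :
    ∑ k ∈ t, x k ∈ Set.Icc 0 1 :=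
  ⟨sum_nonneg fun k _ => hx.1 k, hx.2 ▸ sum_le_univ_sum_of_nonneg hx.1⟩

theorem intervalIntegral.integral_eq_sub_primitive {E : Type*} [NormedAddCommGroup E]
    [NormedSpace ℝ E] {μ : Measure ℝ} {f : ℝ → E} (hf : Integrable f μ) (a b : ℝ) :
    ∫ z in a..b, f z ∂μ = (∫ z in 0..b, f z ∂μ) - ∫ z in 0..a, f z ∂μ :=
  (integral_interval_sub_left hf.intervalIntegrable hf.intervalIntegrable).symm

theorem intervalIntegral.monotone_primitive {μ : Measure ℝ} {f : ℝ → ℝ} (hf : Integrable f μ)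
    (hf0 : 0 ≤ᵐ[μ] f) : Monotone fun t => ∫ z in 0..t, f z ∂μ := fun a b hab => by
  rw [← sub_nonneg, ← integral_eq_sub_primitive hf]
  exact integral_nonneg_of_ae hab hf0

noncomputable def pieceValue {n : ℕ} (f : Fin n → ℝ → ℝ) (x : Fin n → ℝ) (i : Fin n) : ℝ :=
  ∫ z in (∑ k ∈ Iio i, x k)..(∑ k ∈ Iic i, x k), f i z

section PieceValue

variable {n : ℕ} {f : Fin n → ℝ → ℝ}

theorem continuous_pieceValue (hf : ∀ i, Integrable (f i)) (i : Fin n) :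
    Continuous fun x => pieceValue f x i := by
  have hP := continuous_primitive (fun _ _ => (hf i).intervalIntegrable) 0
  have h : (fun x => pieceValue f x i) = fun x =>
      (∫ z in 0..∑ k ∈ Iic i, x k, f i z) - ∫ z in 0..∑ k ∈ Iio i, x k, f i z :=
    funext fun x => integral_eq_sub_primitive (hf i) _ _
  rw [h]
  exact (hP.comp (continuous_finsetSum _ fun k _ => continuous_apply k)).sub
    (hP.comp (continuous_finsetSum _ fun k _ => continuous_apply k))

theorem exists_mem_stdSimplex_pieceValue_add_mul_eq (hn : n ≠ 0) (hf : ∀ i, Integrable (f i))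
    (hf0 : ∀ i, 0 ≤ᵐ[volume] f i) {ε : ℝ} (hε : 0 < ε) :
    ∃ x ∈ stdSimplex ℝ (Fin n), ∀ i j, pieceValue f x i + ε * x i = pieceValue f x j + ε * x j := by
  have : NeZero n := ⟨hn⟩
  choose g hg using fun i => (monotone_primitive (hf i) (hf0 i)).exists_orderIso_add_mul
    (continuous_primitive (fun _ _ => (hf i).intervalIntegrable) 0) hε
  -- `Fin.ofNat n k` wraps around for `k ≥ n`; only the first `n` pieces matter.
  obtain ⟨e, he, hs⟩ := exists_cutSeq_eq_one (fun k : ℕ => g (Fin.ofNat n k)) hn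
  set s := cutSeq (fun k : ℕ => g (Fin.ofNat n k)) e
  have hpiece : ∀ i : Fin n,
      pieceValue f (fun k => s (k + 1) - s k) i + ε * (s (i + 1) - s i) = e := by
    intro i
    have hgi := apply_cutSeq_succ_sub (fun k : ℕ => g (Fin.ofNat n k)) e i
    rw [show Fin.ofNat n i = i from Fin.ext (Nat.mod_eq_of_lt i.isLt), hg, hg] at hgi
    rw [pieceValue, Fin.sum_Iio_sub_succ, Fin.sum_Iic_sub_succ, show s 0 = 0 from rfl, sub_zero,
      sub_zero, integral_eq_sub_primitive (hf i), ← hgi]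
    ring
  exact ⟨_, mem_stdSimplex_of_monotone (monotone_cutSeq _ he) rfl hs,
    fun i j => (hpiece i).trans (hpiece j).symm⟩

theorem exists_mem_stdSimplex_pieceValue_eq (hn : n ≠ 0) (hf : ∀ i, Integrable (f i))
    (hf0 : ∀ i, 0 ≤ᵐ[volume] f i) :
    ∃ x ∈ stdSimplex ℝ (Fin n), ∀ i j, pieceValue f x i = pieceValue f x j := by
  have hD : Continuous fun p : ℝ × (Fin n → ℝ) => fun i => pieceValue f p.2 i + p.1 * p.2 i :=
    continuous_pi fun i => ((continuous_pieceValue hf i).comp continuous_snd).add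
      (continuous_fst.mul ((continuous_apply i).comp continuous_snd))
  have hC : IsClosed {v : Fin n → ℝ | ∀ i j, v i = v j} := by
    simp only [Set.ofPred_forall]
    exact isClosed_iInter fun i => isClosed_iInter fun j =>
      isClosed_eq (continuous_apply i) (continuous_apply j)
  simpa using (isCompact_stdSimplex ℝ (Fin n)).exists_mem_apply_zero_mem_of_forall_pos hD hC
    fun ε hε => exists_mem_stdSimplex_pieceValue_add_mul_eq hn hf hf0 hε

end PieceValue

/-- **Every permutation of an instance with nonnegative additive valuations admits a
connected equitable division.** Agent in position `i` (with valuation `f (σ i)`) receives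
the subinterval from `∑ k < i, x k` to `∑ k ≤ i, x k`. -/
theorem nonneg_additive_perm_exists_equitable (n : ℕ) (hn : 1 ≤ n) (f : Fin n → ℝ → ℝ)
    (hint : ∀ i, IntegrableOn (f i) (Set.Icc 0 1))
    (hnonneg : ∀ i, ∀ᵐ z ∂(volume.restrict (Set.Icc (0:ℝ) 1)), 0 ≤ f i z)
    (σ : Equiv.Perm (Fin n)) :
    ∃ x ∈ stdSimplex ℝ (Fin n), ∀ i j : Fin n,
      (∫ z in (∑ k ∈ Finset.Iio i, x k)..(∑ k ∈ Finset.Iic i, x k), f (σ i) z) =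
      (∫ z in (∑ k ∈ Finset.Iio j, x k)..(∑ k ∈ Finset.Iic j, x k), f (σ j) z) := by
  set φ : Fin n → ℝ → ℝ := fun i => (Set.Icc 0 1).indicator (f (σ i))
  obtain ⟨x, hx, heq⟩ := exists_mem_stdSimplex_pieceValue_eq (n := n) (f := φ) (by omega)
    (fun i => (hint (σ i)).integrable_indicator measurableSet_Icc)
    (fun i => ((ae_restrict_iff' measurableSet_Icc).mp (hnonneg (σ i))).mono
      fun _ hz => Set.indicator_apply_nonneg hz)
  have hpiece : ∀ i, pieceValue φ x i =
      ∫ z in (∑ k ∈ Finset.Iio i, x k)..(∑ k ∈ Finset.Iic i, x k), f (σ i) z := fun i =>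
    integral_congr fun _ hz => Set.indicator_of_mem (Set.uIcc_subset_Icc
      (sum_mem_Icc_of_mem_stdSimplex hx _) (sum_mem_Icc_of_mem_stdSimplex hx _) hz) _
  exact ⟨x, hx, fun i j => by rw [← hpiece, ← hpiece, heq]⟩
end

section
/- Let n ≥ 1 and let v : Fin n → (stdSimplex ℝ (Fin n)) → ℝ be valuations of a SANN instance (v i x = 0 whenever x i = 0, and for every cut-set x some agent i has x i > 0 and v i x ≥ 0). Define the happiest agent h⁺(x) as the lexicographically first agent among those maximizing v_i(x) that, among such maximizers, have the largest coordinate x_i. Then: (1) for each agent i, at the vertex e_i of the simplex the happiest agent is i, i.e., h⁺(e_i) = i; and (2) for every cut-set x with x_i = 0, the happiest agent is not i, i.e., h⁺(x) ≠ i. -/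
/-! The happiest agent always holds a positive share of the cake. By SANN some agent `k` with
`x k > 0` values its piece at `≥ 0`. If `k` is happy, the happiest agent holds at least as much
as `k`; otherwise the maximal value is positive, so the happiest agent values its piece
positively and, by `v i x = 0` when `x i = 0`, that piece is nonempty.
Both Sperner conditions follow: at `e i` only agent `i` has a positive share, and on the facet
`x i = 0` agent `i` has none. -/

open Classical in
/-- The largest value any agent has at cut-set `x`. -/
noncomputable def vmax {n : ℕ} (hn : 1 ≤ n) (v : Fin n → stdSimplex ℝ (Fin n) → ℝ)
    (x : stdSimplex ℝ (Fin n)) : ℝ :=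
  Finset.univ.sup' ⟨⟨0, hn⟩, Finset.mem_univ _⟩ (fun i => v i x)

open Classical in
/-- The set of happy agents: those whose value equals the maximum value. -/
noncomputable def happySet {n : ℕ} (hn : 1 ≤ n) (v : Fin n → stdSimplex ℝ (Fin n) → ℝ)
    (x : stdSimplex ℝ (Fin n)) : Finset (Fin n) :=
  Finset.univ.filter (fun i => v i x = vmax hn v x)

theorem happySet_nonempty {n : ℕ} (hn : 1 ≤ n) (v : Fin n → stdSimplex ℝ (Fin n) → ℝ)
    (x : stdSimplex ℝ (Fin n)) : (happySet hn v x).Nonempty := by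
  classical
  obtain ⟨i, -, hi⟩ :=
    Finset.exists_mem_eq_sup' (⟨⟨0, hn⟩, Finset.mem_univ _⟩ :
      (Finset.univ : Finset (Fin n)).Nonempty) (fun i => v i x)
  exact ⟨i, Finset.mem_filter.mpr ⟨Finset.mem_univ _, hi.symm⟩⟩

open Classical in
/-- The set of happier agents: happy agents with the largest quantity of cake. -/
noncomputable def happierSet {n : ℕ} (hn : 1 ≤ n) (v : Fin n → stdSimplex ℝ (Fin n) → ℝ)
    (x : stdSimplex ℝ (Fin n)) : Finset (Fin n) :=
  (happySet hn v x).filter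
    (fun k => (x : Fin n → ℝ) k =
      (happySet hn v x).sup' (happySet_nonempty hn v x) (fun i => (x : Fin n → ℝ) i))

theorem happierSet_nonempty {n : ℕ} (hn : 1 ≤ n) (v : Fin n → stdSimplex ℝ (Fin n) → ℝ)
    (x : stdSimplex ℝ (Fin n)) : (happierSet hn v x).Nonempty := by
  classical
  obtain ⟨i, hi, hix⟩ :=
    Finset.exists_mem_eq_sup' (happySet_nonempty hn v x) (fun i => (x : Fin n → ℝ) i)
  exact ⟨i, Finset.mem_filter.mpr ⟨hi, hix.symm⟩⟩

/-- The happiest agent: the lexicographically first happier agent. -/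
noncomputable def happiest {n : ℕ} (hn : 1 ≤ n) (v : Fin n → stdSimplex ℝ (Fin n) → ℝ)
    (x : stdSimplex ℝ (Fin n)) : Fin n :=
  (happierSet hn v x).min' (happierSet_nonempty hn v x)

section Happiest

variable {n : ℕ} (hn : 1 ≤ n) (v : Fin n → stdSimplex ℝ (Fin n) → ℝ) (x : stdSimplex ℝ (Fin n))

theorem le_vmax (i : Fin n) : v i x ≤ vmax hn v x :=
  Finset.le_sup' (fun j => v j x) (Finset.mem_univ i)

theorem mem_happySet {i : Fin n} : i ∈ happySet hn v x ↔ v i x = vmax hn v x := by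
  simp [happySet]

theorem happiest_mem_happierSet : happiest hn v x ∈ happierSet hn v x :=
  Finset.min'_mem _ _

theorem happiest_mem_happySet : happiest hn v x ∈ happySet hn v x :=
  (Finset.mem_filter.mp (happiest_mem_happierSet hn v x)).1

theorem coord_le_coord_happiest {k : Fin n} (hk : k ∈ happySet hn v x) :
    (x : Fin n → ℝ) k ≤ (x : Fin n → ℝ) (happiest hn v x) := by
  rw [(Finset.mem_filter.mp (happiest_mem_happierSet hn v x)).2]
  exact Finset.le_sup' (fun i => (x : Fin n → ℝ) i) hk

theorem coord_happiest_pos (hzero : ∀ i, (x : Fin n → ℝ) i = 0 → v i x = 0)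
    (hsann : ∃ i, 0 < (x : Fin n → ℝ) i ∧ 0 ≤ v i x) :
    0 < (x : Fin n → ℝ) (happiest hn v x) := by
  obtain ⟨k, hxk, hvk⟩ := hsann
  rcases (le_vmax hn v x k).eq_or_lt with hk_happy | hk_unhappy
  · exact hxk.trans_le (coord_le_coord_happiest hn v x ((mem_happySet hn v x).mpr hk_happy))
  · have hv_happiest : 0 < v (happiest hn v x) x := by
      rw [(mem_happySet hn v x).mp (happiest_mem_happySet hn v x)]
      exact hvk.trans_lt hk_unhappy
    exact (x.2.1 _).lt_of_ne fun h0 => hv_happiest.ne' (hzero _ h0.symm)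

end Happiest

/-- **The happiest-agent labeling of a SANN instance is a Sperner labeling**:
(1) the vertex `e i` of the simplex is labeled `i`, and
(2) no cut-set on the facet opposite `e i` (i.e. with `x i = 0`) is labeled `i`. -/
theorem happiest_sperner_labeling (n : ℕ) (hn : 1 ≤ n)
    (v : Fin n → stdSimplex ℝ (Fin n) → ℝ)
    (hzero : ∀ (i : Fin n) (x : stdSimplex ℝ (Fin n)), (x : Fin n → ℝ) i = 0 → v i x = 0)
    (hsann : ∀ x : stdSimplex ℝ (Fin n), ∃ i, 0 < (x : Fin n → ℝ) i ∧ 0 ≤ v i x) :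
    (∀ i : Fin n, happiest hn v ⟨Pi.single i 1, single_mem_stdSimplex ℝ i⟩ = i) ∧
    (∀ (i : Fin n) (x : stdSimplex ℝ (Fin n)), (x : Fin n → ℝ) i = 0 →
      happiest hn v x ≠ i) := by
  have hpos x := coord_happiest_pos hn v x (fun i => hzero i x) (hsann x)
  refine ⟨fun i => ?_, fun i x hxi hi => (hpos x).ne' (hi ▸ hxi)⟩
  by_contra hne
  simpa [Pi.single_apply, hne] using hpos ⟨Pi.single i 1, single_mem_stdSimplex ℝ i⟩
end

section
/- Let n ≥ 1 and let f : Fin n → ℝ → ℝ be density functions integrable on [0,1], with cumulative distribution functions F_i(t) = ∫_0^t f_i(z) dz. Suppose the instance is value-ordered, i.e., F_i(t) ≥ F_{i+1}(t) for all t ∈ [0,1] and all i ∈ {1,…,n−1}, and that every agent has nonnegative value for the entire cake, F_i(1) ≥ 0 for all i. Then for every cut-set x in the standard (n−1)-simplex there exists an agent i with x_i > 0 and ∫_{s_{i−1}}^{s_i} f_i(z) dz ≥ 0, where s_k = x_1 + ⋯ + x_k; i.e., the instance is SANN. -/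
/-!
Write `F i` for the cdf of agent `i` and `s k` for the cut points. Agent `i` values its piece
at `F i (s (i+1)) - F i (s i)`. Summing over all agents and pairing `F (i+1) (s (i+1))` with
`F i (s (i+1))`, value-orderedness shows the total is at least `F (n-1) 1 - F 0 0 ≥ 0`.
Agents with empty pieces contribute `0`, so some agent with a nonempty piece has
nonnegative value.
-/

open MeasureTheory Finset

theorem Fin.sub_le_sum_increments {α β : Type*} [AddCommGroup β] [PartialOrder β]
    [IsOrderedAddMonoid β] {m : ℕ} (F : Fin (m + 1) → α → β) (s : ℕ → α)
    (hord : ∀ j : Fin m, F j.succ (s (j + 1)) ≤ F j.castSucc (s (j + 1))) :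
    F (Fin.last m) (s (m + 1)) - F 0 (s 0) ≤ ∑ i, (F i (s (i + 1)) - F i (s i)) := by
  have hpair : ∑ j : Fin m, F j.succ (s (j + 1)) ≤ ∑ j : Fin m, F j.castSucc (s (j + 1)) :=
    sum_le_sum fun j _ => hord j
  rw [sum_sub_distrib, Fin.sum_univ_castSucc, Fin.sum_univ_succ]
  simp only [Fin.val_castSucc, Fin.val_succ, Fin.val_last, Fin.val_zero]
  rw [← sub_nonneg]
  convert sub_nonneg.2 hpair using 1
  abel

theorem exists_pos_and_nonneg_of_sum_nonneg {ι : Type*} [Fintype ι] {x v : ι → ℝ}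
    (hx : ∀ i, 0 ≤ x i) (hxv : ∀ i, x i = 0 → v i = 0) (hne : ∃ i, x i ≠ 0)
    (hsum : 0 ≤ ∑ i, v i) : ∃ i, 0 < x i ∧ 0 ≤ v i := by
  by_contra! hneg
  have hle : ∀ i, v i ≤ 0 := fun i =>
    (hx i).eq_or_lt.elim (fun h => (hxv i h.symm).le) fun h => (hneg i h).le
  obtain ⟨i, hi⟩ := hne
  have hlt : ∑ i, v i < ∑ _i : ι, (0 : ℝ) :=
    sum_lt_sum (fun i _ => hle i) ⟨i, mem_univ i, hneg i ((hx i).lt_of_ne' hi)⟩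
  simp only [sum_const_zero] at hlt
  linarith

section CutPoint

variable {n : ℕ} (x : Fin n → ℝ)

/-- The paper's `s_k = x 0 + ⋯ + x (k - 1)`, with agents indexed from `0`. -/
def cutPoint (k : ℕ) : ℝ := ∑ j : Fin n with j.val < k, x j

@[simp]
theorem cutPoint_zero : cutPoint x 0 = 0 := by
  simp [cutPoint]

theorem cutPoint_of_le {k : ℕ} (hk : n ≤ k) : cutPoint x k = ∑ j, x j := by
  rw [cutPoint, filter_true_of_mem fun j _ => j.isLt.trans_le hk]

theorem sum_Iio_eq_cutPoint (i : Fin n) : ∑ j ∈ Iio i, x j = cutPoint x i := by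
  rw [cutPoint]
  congr 1
  ext j
  simp only [mem_Iio, mem_filter, mem_univ, true_and, Fin.lt_def]

theorem sum_Iic_eq_cutPoint (i : Fin n) : ∑ j ∈ Iic i, x j = cutPoint x (i + 1) := by
  rw [cutPoint]
  congr 1
  ext j
  simp only [mem_Iic, mem_filter, mem_univ, true_and, Fin.le_def, Nat.lt_succ_iff]

theorem cutPoint_succ (i : Fin n) : cutPoint x (i + 1) = cutPoint x i + x i := by
  rw [← sum_Iio_eq_cutPoint, ← sum_Iic_eq_cutPoint, ← Iio_insert, sum_insert (by simp),
    add_comm]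

variable {x}

theorem cutPoint_mem_Icc (hx : x ∈ stdSimplex ℝ (Fin n)) (k : ℕ) :
    cutPoint x k ∈ Set.Icc (0 : ℝ) 1 :=
  ⟨sum_nonneg fun j _ => hx.1 j,
    hx.2 ▸ sum_le_univ_sum_of_nonneg fun j => hx.1 j⟩

end CutPoint

theorem value_ordered_is_sann_general (n : ℕ) (f : Fin n → ℝ → ℝ)
    (hint : ∀ i, IntegrableOn (f i) (Set.Icc 0 1))
    (hord : ∀ (i : ℕ) (hi : i + 1 < n), ∀ t ∈ Set.Icc (0:ℝ) 1,
      (∫ z in (0:ℝ)..t, f ⟨i + 1, hi⟩ z) ≤ ∫ z in (0:ℝ)..t, f ⟨i, Nat.lt_of_succ_lt hi⟩ z)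
    (hcake : ∀ i, 0 ≤ ∫ z in (0:ℝ)..1, f i z)
    (x : Fin n → ℝ) (hx : x ∈ stdSimplex ℝ (Fin n)) :
    ∃ i : Fin n, 0 < x i ∧
      0 ≤ ∫ z in (∑ k ∈ Finset.Iio i, x k)..(∑ k ∈ Finset.Iic i, x k), f i z := by
  obtain ⟨i₀, -, hi₀⟩ := exists_ne_zero_of_sum_ne_zero (hx.2.symm ▸ one_ne_zero)
  obtain ⟨m, rfl⟩ := Nat.exists_eq_add_one.2 i₀.pos
  set F : Fin (m + 1) → ℝ → ℝ := fun i t => ∫ z in (0:ℝ)..t, f i z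
  have hii : ∀ i k, IntervalIntegrable (f i) volume 0 (cutPoint x k) := fun i k =>
    ((hint i).mono_set (Set.uIcc_subset_Icc (by simp) (cutPoint_mem_Icc hx k))).intervalIntegrable
  simp only [sum_Iio_eq_cutPoint, sum_Iic_eq_cutPoint]
  refine exists_pos_and_nonneg_of_sum_nonneg hx.1 (fun i hi => ?_) ⟨i₀, hi₀⟩ ?_
  · rw [cutPoint_succ, hi, add_zero, intervalIntegral.integral_same]
  · calc (0 : ℝ) ≤ F (Fin.last m) (cutPoint x (m + 1)) - F 0 (cutPoint x 0) := by
          simp [F, cutPoint_of_le x le_rfl, hx.2, hcake]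
      _ ≤ ∑ i, (F i (cutPoint x (i + 1)) - F i (cutPoint x i)) :=
          Fin.sub_le_sum_increments F (cutPoint x)
            fun j => hord j j.succ.isLt _ (cutPoint_mem_Icc hx _)
      _ = _ := sum_congr rfl fun i _ =>
          intervalIntegral.integral_interval_sub_left (hii i _) (hii i _)

/-- **A value-ordered instance (with every agent having nonnegative value for the whole
cake) is a SANN instance**: for every cut-set some agent gets a piece of positive length
with nonnegative value. -/
theorem value_ordered_is_sann (n : ℕ) (hn : 1 ≤ n) (f : Fin n → ℝ → ℝ)
    (hint : ∀ i, IntegrableOn (f i) (Set.Icc 0 1))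
    (hord : ∀ (i : ℕ) (hi : i + 1 < n), ∀ t ∈ Set.Icc (0:ℝ) 1,
      (∫ z in (0:ℝ)..t, f ⟨i + 1, hi⟩ z) ≤ ∫ z in (0:ℝ)..t, f ⟨i, Nat.lt_of_succ_lt hi⟩ z)
    (hcake : ∀ i, 0 ≤ ∫ z in (0:ℝ)..1, f i z)
    (x : Fin n → ℝ) (hx : x ∈ stdSimplex ℝ (Fin n)) :
    ∃ i : Fin n, 0 < x i ∧
      0 ≤ ∫ z in (∑ k ∈ Finset.Iio i, x k)..(∑ k ∈ Finset.Iic i, x k), f i z :=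
  value_ordered_is_sann_general n f hint hord hcake x hx
end

section
/- Let f : ℝ → ℝ be integrable on [0,1], let 0 ≤ l ≤ r ≤ 1 be such that f(z) ≤ 0 for z ∈ [0,l) ∪ (r,1] and f(z) ≥ 0 for z ∈ [l,r], and suppose F(1) ≥ 0 where F(t) = ∫_0^t f(z) dz. Then there exists θ ∈ [l,r] such that F(θ) = 0, F(z) ≤ 0 for all z ∈ [0,θ], and F(z) ≥ 0 for all z ∈ [θ,1]. -/
/-!
The cdf `F` is antitone on `[0,l]`, monotone on `[l,r]` and antitone on `[r,1]`.
Hence `F l ≤ F 0 = 0` and `F r ≥ F 1 ≥ 0`, so the intermediate value theorem gives a zero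
`θ ∈ [l,r]` of `F`, and the three monotonicity pieces show that `F` changes sign only at `θ`.
-/

open MeasureTheory Set

namespace intervalIntegral

variable {f : ℝ → ℝ} {a b c : ℝ}

theorem integral_nonneg_of_nonneg_on_Ioo (hab : a ≤ b) (hf : ∀ z ∈ Ioo a b, 0 ≤ f z) :
    0 ≤ ∫ z in a..b, f z := by
  rw [integral_of_le hab, integral_Ioc_eq_integral_Ioo]
  exact setIntegral_nonneg measurableSet_Ioo hf

theorem monotoneOn_primitive_of_nonneg_on_Ioo (hf : IntegrableOn f (Icc c b)) (hca : c ≤ a)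
    (hpos : ∀ z ∈ Ioo a b, 0 ≤ f z) : MonotoneOn (fun t => ∫ z in c..t, f z) (Icc a b) := by
  intro x hx y hy hxy
  have hint : ∀ t ∈ Icc a b, IntervalIntegrable f volume c t := fun t ht =>
    (hf.mono_set (uIcc_subset_Icc ⟨le_rfl, hca.trans (ht.1.trans ht.2)⟩
      ⟨hca.trans ht.1, ht.2⟩)).intervalIntegrable
  have hdiff := integral_interval_sub_left (hint y hy) (hint x hx)
  have hxy_nonneg : 0 ≤ ∫ z in x..y, f z :=
    integral_nonneg_of_nonneg_on_Ioo hxy fun z hz =>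
      hpos z ⟨hx.1.trans_lt hz.1, hz.2.trans_le hy.2⟩
  show ∫ z in c..x, f z ≤ ∫ z in c..y, f z
  linarith

theorem antitoneOn_primitive_of_nonpos_on_Ioo (hf : IntegrableOn f (Icc c b)) (hca : c ≤ a)
    (hneg : ∀ z ∈ Ioo a b, f z ≤ 0) : AntitoneOn (fun t => ∫ z in c..t, f z) (Icc a b) := by
  have hmono :=
    monotoneOn_primitive_of_nonneg_on_Ioo hf.neg hca fun z hz => neg_nonneg.2 (hneg z hz)
  simp only [Pi.neg_apply, integral_neg] at hmono
  exact fun x hx y hy hxy => neg_le_neg_iff.1 (hmono hx hy hxy)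

end intervalIntegral

open intervalIntegral

/-- **Threshold for a split-cake density**: if `f` is nonpositive on `[0,l) ∪ (r,1]`,
nonnegative on `[l,r]`, and has nonnegative total value, then there is a threshold
`θ ∈ [l,r]` at which the cdf vanishes, with the cdf nonpositive before `θ` and
nonnegative after `θ`. -/
theorem split_cake_threshold (f : ℝ → ℝ)
    (hint : IntegrableOn f (Set.Icc 0 1))
    (l r : ℝ) (hl : 0 ≤ l) (hlr : l ≤ r) (hr : r ≤ 1)
    (hneg : ∀ z, z ∈ Set.Ico 0 l ∪ Set.Ioc r 1 → f z ≤ 0)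
    (hpos : ∀ z ∈ Set.Icc l r, 0 ≤ f z)
    (hcake : 0 ≤ ∫ z in (0:ℝ)..1, f z) :
    ∃ θ ∈ Set.Icc l r, (∫ z in (0:ℝ)..θ, f z) = 0 ∧
      (∀ z ∈ Set.Icc (0:ℝ) θ, (∫ t in (0:ℝ)..z, f t) ≤ 0) ∧
      (∀ z ∈ Set.Icc θ 1, 0 ≤ ∫ t in (0:ℝ)..z, f t) := by
  set F : ℝ → ℝ := fun t => ∫ z in (0:ℝ)..t, f z
  have hF0 : F 0 = 0 := integral_same
  have hanti_left : AntitoneOn F (Icc 0 l) :=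
    antitoneOn_primitive_of_nonpos_on_Ioo (hint.mono_set (Icc_subset_Icc le_rfl (hlr.trans hr)))
      le_rfl fun z hz => hneg z (Or.inl (Ioo_subset_Ico_self hz))
  have hmono : MonotoneOn F (Icc l r) :=
    monotoneOn_primitive_of_nonneg_on_Ioo (hint.mono_set (Icc_subset_Icc le_rfl hr)) hl
      fun z hz => hpos z (Ioo_subset_Icc_self hz)
  have hanti_right : AntitoneOn F (Icc r 1) :=
    antitoneOn_primitive_of_nonpos_on_Ioo hint (hl.trans hlr)
      fun z hz => hneg z (Or.inr (Ioo_subset_Ioc_self hz))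
  have hFl : F l ≤ 0 := (hanti_left ⟨le_rfl, hl⟩ ⟨hl, le_rfl⟩ hl).trans_eq hF0
  have hFr : 0 ≤ F r := hcake.trans (hanti_right ⟨le_rfl, hr⟩ ⟨hr, le_rfl⟩ hr)
  have hcont : ContinuousOn F (Icc l r) := by
    have h01 : uIcc (0:ℝ) 1 = Icc 0 1 := uIcc_of_le zero_le_one
    exact (h01 ▸ continuousOn_primitive_interval (h01 ▸ hint)).mono (Icc_subset_Icc hl hr)
  obtain ⟨θ, hθ, hFθ⟩ := intermediate_value_Icc hlr hcont ⟨hFl, hFr⟩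
  refine ⟨θ, hθ, hFθ, fun z hz => ?_, fun z hz => ?_⟩
  · rcases le_total z l with hzl | hlz
    · exact (hanti_left ⟨le_rfl, hl⟩ ⟨hz.1, hzl⟩ hz.1).trans_eq hF0
    · exact (hmono ⟨hlz, hz.2.trans hθ.2⟩ hθ hz.2).trans_eq hFθ
  · rcases le_total z r with hzr | hrz
    · exact hFθ.symm.trans_le (hmono hθ ⟨hθ.1.trans hz.1, hzr⟩ hz.1)
    · exact hcake.trans (hanti_right ⟨hrz, hz.2⟩ ⟨hr, le_rfl⟩ hz.2)
end

section
/- Let n ≥ 1 and let f : Fin n → ℝ → ℝ be integrable densities on [0,1] with cdfs F_i(t) = ∫_0^t f_i(z) dz, and suppose for each agent i there is a threshold θ_i ∈ [0,1] with F_i(z) ≤ 0 for z ≤ θ_i and F_i(z) ≥ 0 for z ≥ θ_i, and that the agents are ordered so that θ_1 ≤ θ_2 ≤ ⋯ ≤ θ_n. Then for every cut-set x in the standard (n−1)-simplex there exists an agent i with x_i > 0 whose piece [s_{i−1}, s_i] (where s_k = x_1 + ⋯ + x_k) contains θ_i; consequently that agent's value ∫_{s_{i−1}}^{s_i} f_i(z)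 dz = F_i(s_i) − F_i(s_{i−1}) is nonnegative. -/
open MeasureTheory Finset

/-!
Walk along the agents with nonempty pieces. The first one starts its piece at `0 ≤ θ`, so some
agent `j` with a nonempty piece starts at or before its own threshold; take the last one. If its
piece ended before `θ j`, the next agent with a nonempty piece would start there, hence before
`θ j` and so before its own (larger) threshold, contradicting the choice of `j`; and if there is
no next agent, the piece of `j` ends at `1 ≥ θ j`. The value of `j` is then `F j (b) - F j (a)`
with `F j (a) ≤ 0 ≤ F j (b)`.
-/

section PartialSums

variable {ι : Type*} [Fintype ι] [LinearOrder ι] [LocallyFiniteOrderBot ι]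

theorem exists_pos_sum_Iio_eq_sum_of_isLowerSet {x : ι → ℝ} (hx : ∀ i, 0 ≤ x i) {L : Finset ι}
    (hL : IsLowerSet (L : Set ι)) (hlt : ∑ i ∈ L, x i < ∑ i, x i) :
    ∃ k ∉ L, 0 < x k ∧ ∑ i ∈ Iio k, x i = ∑ i ∈ L, x i := by
  classical
  have hpos : (univ.filter fun i => i ∉ L ∧ 0 < x i).Nonempty := by
    by_contra hempty
    rw [not_nonempty_iff_eq_empty, filter_eq_empty_iff] at hempty
    refine hlt.ne (sum_subset (subset_univ L) fun i _ hiL => ?_)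
    by_contra hi
    exact hempty (mem_univ i) ⟨hiL, (hx i).lt_of_ne' hi⟩
  obtain ⟨k, hk, hmin⟩ := exists_min_image _ id hpos
  obtain ⟨hkL, hxk⟩ := (mem_filter.mp hk).2
  refine ⟨k, hkL, hxk, (sum_subset (fun i hi => ?_) fun i hi hiL => ?_).symm⟩
  · exact mem_Iio.mpr (lt_of_not_ge fun hki => hkL (hL hki hi))
  · exact ((hx i).lt_or_eq.resolve_left fun hxi =>
      (mem_Iio.mp hi).not_ge (hmin i (mem_filter.mpr ⟨mem_univ i, hiL, hxi⟩))).symm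

theorem exists_pos_and_mem_Icc_sum_Iio_sum_Iic {x : ι → ℝ} (hx : x ∈ stdSimplex ℝ ι)
    {θ : ι → ℝ} (hθ : ∀ i, θ i ∈ Set.Icc (0 : ℝ) 1) (hmono : Monotone θ) :
    ∃ i, 0 < x i ∧ θ i ∈ Set.Icc (∑ k ∈ Iio i, x k) (∑ k ∈ Iic i, x k) := by
  classical
  obtain ⟨hx0, hx1⟩ := hx
  set P := univ.filter fun i => 0 < x i ∧ ∑ k ∈ Iio i, x k ≤ θ i
  have hP : P.Nonempty := by
    obtain ⟨k, -, hxk, hk⟩ := exists_pos_sum_Iio_eq_sum_of_isLowerSet hx0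
      (L := ∅) (by simpa using isLowerSet_empty) (by simp [hx1])
    exact ⟨k, mem_filter.mpr ⟨mem_univ k, hxk, by simpa [hk] using (hθ k).1⟩⟩
  obtain ⟨j, hj, hmax⟩ := exists_max_image P id hP
  obtain ⟨hxj, hjθ⟩ := (mem_filter.mp hj).2
  refine ⟨j, hxj, hjθ, le_of_not_gt fun hend => ?_⟩
  obtain ⟨k, hkj, hxk, hk⟩ := exists_pos_sum_Iio_eq_sum_of_isLowerSet hx0
    (L := Iic j) (by simpa using isLowerSet_Iic j) (hx1 ▸ hend.trans_le (hθ j).2)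
  have hjk : j < k := lt_of_not_ge (mt mem_Iic.mpr hkj)
  have hkP : k ∈ P := mem_filter.mpr ⟨mem_univ k, hxk, hk ▸ hend.le.trans (hmono hjk.le)⟩
  exact (hmax k hkP).not_gt hjk

end PartialSums

theorem integral_nonneg_of_cdf_nonpos_of_cdf_nonneg {f : ℝ → ℝ} {c d a b : ℝ}
    (hf : IntegrableOn f (Set.Icc c d)) (ha : a ∈ Set.Icc c d) (hb : b ∈ Set.Icc c d)
    (hFa : ∫ t in c..a, f t ≤ 0) (hFb : 0 ≤ ∫ t in c..b, f t) : 0 ≤ ∫ t in a..b, f t := by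
  have hc : c ∈ Set.Icc c d := ⟨le_rfl, ha.1.trans ha.2⟩
  rw [← intervalIntegral.integral_interval_sub_left
    (hf.mono_set (Set.uIcc_subset_Icc hc hb)).intervalIntegrable
    (hf.mono_set (Set.uIcc_subset_Icc hc ha)).intervalIntegrable]
  linarith

theorem threshold_ordered_is_sann_general (n : ℕ) (f : Fin n → ℝ → ℝ)
    (hint : ∀ i, IntegrableOn (f i) (Set.Icc 0 1))
    (θ : Fin n → ℝ) (hθ : ∀ i, θ i ∈ Set.Icc (0:ℝ) 1)
    (hbefore : ∀ i, ∀ z ∈ Set.Icc (0:ℝ) 1, z ≤ θ i → (∫ t in (0:ℝ)..z, f i t) ≤ 0)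
    (hafter : ∀ i, ∀ z ∈ Set.Icc (0:ℝ) 1, θ i ≤ z → 0 ≤ ∫ t in (0:ℝ)..z, f i t)
    (hsorted : Monotone θ)
    (x : Fin n → ℝ) (hx : x ∈ stdSimplex ℝ (Fin n)) :
    ∃ i : Fin n, 0 < x i ∧
      θ i ∈ Set.Icc (∑ k ∈ Finset.Iio i, x k) (∑ k ∈ Finset.Iic i, x k) ∧
      0 ≤ ∫ z in (∑ k ∈ Finset.Iio i, x k)..(∑ k ∈ Finset.Iic i, x k), f i z := by
  obtain ⟨i, hxi, hpiece⟩ := exists_pos_and_mem_Icc_sum_Iio_sum_Iic hx hθ hsorted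
  have ha : ∑ k ∈ Iio i, x k ∈ Set.Icc (0 : ℝ) 1 :=
    ⟨sum_nonneg fun k _ => hx.1 k, hpiece.1.trans (hθ i).2⟩
  have hb : ∑ k ∈ Iic i, x k ∈ Set.Icc (0 : ℝ) 1 :=
    ⟨(hθ i).1.trans hpiece.2,
      hx.2 ▸ sum_le_sum_of_subset_of_nonneg (subset_univ _) fun k _ _ => hx.1 k⟩
  exact ⟨i, hxi, hpiece, integral_nonneg_of_cdf_nonpos_of_cdf_nonneg (hint i) ha hb
    (hbefore i _ ha hpiece.1) (hafter i _ hb hpiece.2)⟩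

/-- **Key step for split-cake instances**: if agents are sorted by thresholds
`θ 1 ≤ … ≤ θ n`, where each cdf `F i` is nonpositive before `θ i` and nonnegative after,
then every cut-set gives some agent a piece of positive length containing its threshold;
consequently that agent's value is nonnegative. -/
theorem threshold_ordered_is_sann (n : ℕ) (hn : 1 ≤ n) (f : Fin n → ℝ → ℝ)
    (hint : ∀ i, IntegrableOn (f i) (Set.Icc 0 1))
    (θ : Fin n → ℝ) (hθ : ∀ i, θ i ∈ Set.Icc (0:ℝ) 1)
    (hbefore : ∀ i, ∀ z ∈ Set.Icc (0:ℝ) 1, z ≤ θ i → (∫ t in (0:ℝ)..z, f i t) ≤ 0)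
    (hafter : ∀ i, ∀ z ∈ Set.Icc (0:ℝ) 1, θ i ≤ z → 0 ≤ ∫ t in (0:ℝ)..z, f i t)
    (hsorted : Monotone θ)
    (x : Fin n → ℝ) (hx : x ∈ stdSimplex ℝ (Fin n)) :
    ∃ i : Fin n, 0 < x i ∧
      θ i ∈ Set.Icc (∑ k ∈ Finset.Iio i, x k) (∑ k ∈ Finset.Iic i, x k) ∧
      0 ≤ ∫ z in (∑ k ∈ Finset.Iio i, x k)..(∑ k ∈ Finset.Iic i, x k), f i z :=
  threshold_ordered_is_sann_general n f hint θ hθ hbefore hafter hsorted x hx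
end

section
/- Let n ≥ 1 and let f : Fin n → ℝ → ℝ be split-cake densities: each f_i is integrable on [0,1], there exist 0 ≤ l_i ≤ r_i ≤ 1 with f_i(z) ≤ 0 for z ∈ [0,l_i) ∪ (r_i,1] and f_i(z) ≥ 0 for z ∈ [l_i, r_i], and ∫_0^1 f_i(z) dz ≥ 0. Then there exists a permutation σ of Fin n such that for every cut-set x in the standard (n−1)-simplex there is an index i with x_i > 0 and ∫_{s_{i−1}}^{s_i} f_{σ(i)}(z) dz ≥ 0, where s_k = x_1 + ⋯ + x_k; i.e., every split-cake instance admits a SANN permutation. -/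
/-!
Each agent's primitive `F t = ∫₀ᵗ f` is nonpositive up to `l`, nondecreasing on `[l, r]`
and nonincreasing on `[r, 1]` with `F 1 ≥ 0`, so it has a crossing point `a` with `F ≤ 0`
on `[0, a]` and `F ≥ 0` on `[a, 1]`. Order the agents by their crossing points. For a
cut-set with partial sums `s₀ ≤ s₁ ≤ ⋯`, the nondecreasing thresholds are crossed by the
partial sums at some nonempty piece: `s_{i-1} ≤ a_{σ i} ≤ s_i`. That agent values its piece
at `F(s_i) - F(s_{i-1}) ≥ 0`.
-/

open MeasureTheory Set

theorem intervalIntegral_nonpos_of_forall_Ioo {f : ℝ → ℝ} {a b : ℝ} (hab : a ≤ b)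
    (hf : ∀ z ∈ Ioo a b, f z ≤ 0) : ∫ z in a..b, f z ≤ 0 := by
  rw [intervalIntegral.integral_of_le hab, integral_Ioc_eq_integral_Ioo]
  exact setIntegral_nonpos measurableSet_Ioo hf

theorem integral_interval_sub_left_of_integrableOn_Icc {f : ℝ → ℝ} {p q t u : ℝ}
    (hf : IntegrableOn f (Icc p q)) (ht : t ∈ Icc p q) (hu : u ∈ Icc p q) :
    (∫ z in p..u, f z) - ∫ z in p..t, f z = ∫ z in t..u, f z := by
  have hp : p ∈ Icc p q := ⟨le_rfl, ht.1.trans ht.2⟩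
  exact intervalIntegral.integral_interval_sub_left
    (hf.mono_set (uIcc_subset_Icc hp hu)).intervalIntegrable
    (hf.mono_set (uIcc_subset_Icc hp ht)).intervalIntegrable

theorem exists_crossing_of_monotoneOn_of_antitoneOn {F : ℝ → ℝ} {p l r q : ℝ}
    (hpl : p ≤ l) (hlr : l ≤ r) (hrq : r ≤ q) (hcont : ContinuousOn F (Icc l r))
    (hneg : ∀ t ∈ Icc p l, F t ≤ 0) (hmono : MonotoneOn F (Icc l r))
    (hanti : AntitoneOn F (Icc r q)) (hq : 0 ≤ F q) :
    ∃ a ∈ Icc l r, (∀ t ∈ Icc p a, F t ≤ 0) ∧ ∀ t ∈ Icc a q, 0 ≤ F t := by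
  have hFl : F l ≤ 0 := hneg l ⟨hpl, le_rfl⟩
  have hFr : 0 ≤ F r := hq.trans (hanti ⟨le_rfl, hrq⟩ ⟨hrq, le_rfl⟩ hrq)
  obtain ⟨a, ha, hFa⟩ := intermediate_value_Icc hlr hcont ⟨hFl, hFr⟩
  refine ⟨a, ha, fun t ht => ?_, fun t ht => ?_⟩
  · rcases le_total t l with htl | hlt
    · exact hneg t ⟨ht.1, htl⟩
    · exact hFa ▸ hmono ⟨hlt, ht.2.trans ha.2⟩ ha ht.2
  · rcases le_total t r with htr | hrt
    · exact hFa ▸ hmono ha ⟨ha.1.trans ht.1, htr⟩ ht.1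
    · exact hq.trans (hanti ⟨hrt, ht.2⟩ ⟨hrt.trans ht.2, le_rfl⟩ ht.2)

theorem exists_primitive_crossing {f : ℝ → ℝ} (hf : IntegrableOn f (Icc 0 1)) {l r : ℝ}
    (hl : 0 ≤ l) (hlr : l ≤ r) (hr : r ≤ 1)
    (hneg : ∀ z ∈ Ico 0 l ∪ Ioc r 1, f z ≤ 0) (hpos : ∀ z ∈ Icc l r, 0 ≤ f z)
    (htotal : 0 ≤ ∫ z in (0:ℝ)..1, f z) :
    ∃ a ∈ Icc (0:ℝ) 1, (∀ t ∈ Icc 0 a, ∫ z in (0:ℝ)..t, f z ≤ 0) ∧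
      ∀ t ∈ Icc a 1, 0 ≤ ∫ z in (0:ℝ)..t, f z := by
  have hsub : ∀ t ∈ Icc (0:ℝ) 1, ∀ u ∈ Icc (0:ℝ) 1,
      (∫ z in (0:ℝ)..u, f z) - ∫ z in (0:ℝ)..t, f z = ∫ z in t..u, f z :=
    fun t ht u hu => integral_interval_sub_left_of_integrableOn_Icc hf ht hu
  have hcont : ContinuousOn (fun t => ∫ z in (0:ℝ)..t, f z) (Icc l r) := by
    refine (intervalIntegral.continuousOn_primitive_interval (b := 1) ?_).mono ?_ <;>
      rw [uIcc_of_le zero_le_one]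
    exacts [hf, Icc_subset_Icc hl hr]
  have hinit : ∀ t ∈ Icc 0 l, ∫ z in (0:ℝ)..t, f z ≤ 0 := fun t ht =>
    intervalIntegral_nonpos_of_forall_Ioo ht.1 fun z hz =>
      hneg z (Or.inl ⟨hz.1.le, hz.2.trans_le ht.2⟩)
  have hmono : MonotoneOn (fun t => ∫ z in (0:ℝ)..t, f z) (Icc l r) := by
    intro t ht u hu htu
    rw [← sub_nonneg,
      hsub t ⟨hl.trans ht.1, ht.2.trans hr⟩ u ⟨hl.trans hu.1, hu.2.trans hr⟩]
    exact intervalIntegral.integral_nonneg htu fun z hz =>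
      hpos z ⟨ht.1.trans hz.1, hz.2.trans hu.2⟩
  have hanti : AntitoneOn (fun t => ∫ z in (0:ℝ)..t, f z) (Icc r 1) := by
    intro t ht u hu htu
    have hr0 : 0 ≤ r := hl.trans hlr
    rw [← sub_nonpos, hsub t ⟨hr0.trans ht.1, ht.2⟩ u ⟨hr0.trans hu.1, hu.2⟩]
    exact intervalIntegral_nonpos_of_forall_Ioo htu fun z hz =>
      hneg z (Or.inr ⟨ht.1.trans_lt hz.1, hz.2.le.trans hu.2⟩)
  obtain ⟨a, ha, hcross⟩ :=
    exists_crossing_of_monotoneOn_of_antitoneOn hl hlr hr hcont hinit hmono hanti htotal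
  exact ⟨a, ⟨hl.trans ha.1, ha.2.trans hr⟩, hcross⟩

theorem Nat.exists_step_mem_Icc_of_monotone {u b : ℕ → ℝ} (hu : Monotone u) (hb : Monotone b)
    {n : ℕ} (h0 : u 0 ≤ b 0) (hn : b n ≤ u n) (hpos : u 0 < u n) :
    ∃ i < n, u i < u (i + 1) ∧ b i ∈ Icc (u i) (u (i + 1)) := by
  induction n generalizing u b with
  | zero => exact absurd hpos (lt_irrefl _)
  | succ n ih =>
    by_cases hstep : u 0 < u 1 ∧ b 0 ≤ u 1
    · exact ⟨0, n.succ_pos, hstep.1, h0, hstep.2⟩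
    -- Otherwise the threshold is still ahead after the first step, so restart from index 1.
    have h1 : u 1 ≤ b 1 ∧ u 1 < u (n + 1) := by
      rcases not_and_or.mp hstep with hflat | hbelow
      · have hu01 : u 1 = u 0 := le_antisymm (not_lt.mp hflat) (hu zero_le_one)
        exact ⟨hu01 ▸ h0.trans (hb zero_le_one), hu01 ▸ hpos⟩
      · have hb01 := not_le.mp hbelow
        exact ⟨hb01.le.trans (hb zero_le_one),
          hb01.trans_le ((hb (n + 1).zero_le).trans hn)⟩
    obtain ⟨i, hi, hrest⟩ := ih (u := fun k => u (k + 1)) (b := fun k => b (k + 1))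
      (fun _ _ h => hu (Nat.succ_le_succ h)) (fun _ _ h => hb (Nat.succ_le_succ h)) h1.1 hn h1.2
    exact ⟨i + 1, Nat.succ_lt_succ hi, hrest⟩

theorem exists_pos_and_partialSums_bracket {n : ℕ} {x : Fin n → ℝ}
    (hx : x ∈ stdSimplex ℝ (Fin n)) {c : Fin n → ℝ} (hc : Monotone c)
    (hc01 : ∀ i, c i ∈ Icc 0 1) :
    ∃ i, 0 < x i ∧ ∑ k ∈ Finset.Iio i, x k ∈ Icc 0 (c i) ∧
      ∑ k ∈ Finset.Iic i, x k ∈ Icc (c i) 1 := by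
  classical
  set u : ℕ → ℝ := fun m => ∑ k ∈ Finset.univ.filter fun k : Fin n => (k : ℕ) < m, x k
    with hu_def
  -- Padding by `1` keeps `b` monotone, as `c ≤ 1`.
  set b : ℕ → ℝ := fun m => if h : m < n then c ⟨m, h⟩ else 1 with hb_def
  have hu : Monotone u := fun m m' h =>
    Finset.sum_le_sum_of_subset_of_nonneg
      (Finset.monotone_filter_right _ fun _ _ hk => hk.trans_le h)
      fun k _ _ => hx.1 k
  have hb : Monotone b := by
    intro m m' h
    simp only [hb_def]
    split_ifs with hm hm'
    · exact hc (Fin.mk_le_mk.mpr h)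
    · exact (hc01 _).2
    · omega
    · rfl
  have hu0 : u 0 = 0 := by simp [hu_def]
  have hun : u n = 1 := by simpa [hu_def] using hx.2
  have hb0 : u 0 ≤ b 0 := by
    rw [hu0]
    by_cases h : 0 < n
    · simpa [hb_def, h] using (hc01 ⟨0, h⟩).1
    · simp [hb_def, h]
  obtain ⟨i, hi, hstep, hbi⟩ := Nat.exists_step_mem_Icc_of_monotone (n := n) hu hb hb0
    (by simp [hb_def, hun]) (by rw [hu0, hun]; exact one_pos)
  have hIio : ∑ k ∈ Finset.Iio ⟨i, hi⟩, x k = u i := by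
    rw [← Finset.filter_gt_eq_Iio]; rfl
  have hIic : ∑ k ∈ Finset.Iic ⟨i, hi⟩, x k = u (i + 1) := by
    rw [← Finset.filter_ge_eq_Iic, hu_def]
    exact Finset.sum_congr (Finset.filter_congr fun k _ => by simp [Fin.le_def]) fun _ _ => rfl
  have hxi : x ⟨i, hi⟩ = u (i + 1) - u i := by
    rw [← hIic, ← hIio, ← Finset.Iio_insert, Finset.sum_insert Finset.notMem_Iio_self,
      add_sub_cancel_right]
  have hbi' : b i = c ⟨i, hi⟩ := dif_pos hi
  refine ⟨⟨i, hi⟩, hxi ▸ sub_pos.mpr hstep, ?_, ?_⟩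
  · rw [hIio, ← hbi', ← hu0]
    exact ⟨hu i.zero_le, hbi.1⟩
  · rw [hIic, ← hbi', ← hun]
    exact ⟨hbi.2, hu hi⟩

theorem split_cake_admits_sann_permutation_general (n : ℕ) (f : Fin n → ℝ → ℝ)
    (hint : ∀ i, IntegrableOn (f i) (Set.Icc 0 1))
    (hsplit : ∀ i, ∃ l r : ℝ, 0 ≤ l ∧ l ≤ r ∧ r ≤ 1 ∧
      (∀ z, z ∈ Set.Ico 0 l ∪ Set.Ioc r 1 → f i z ≤ 0) ∧
      (∀ z ∈ Set.Icc l r, 0 ≤ f i z))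
    (hcake : ∀ i, 0 ≤ ∫ z in (0:ℝ)..1, f i z) :
    ∃ σ : Equiv.Perm (Fin n), ∀ x : Fin n → ℝ, x ∈ stdSimplex ℝ (Fin n) →
      ∃ i : Fin n, 0 < x i ∧
        0 ≤ ∫ z in (∑ k ∈ Finset.Iio i, x k)..(∑ k ∈ Finset.Iic i, x k), f (σ i) z := by
  choose l r hl hlr hr hneg hpos using hsplit
  choose a ha hbefore hafter using fun i =>
    exists_primitive_crossing (hint i) (hl i) (hlr i) (hr i) (hneg i) (hpos i) (hcake i)
  refine ⟨Tuple.sort a, fun x hx => ?_⟩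
  obtain ⟨i, hxi, hleft, hright⟩ :=
    exists_pos_and_partialSums_bracket hx (Tuple.monotone_sort a) fun i => ha _
  refine ⟨i, hxi, ?_⟩
  rw [← integral_interval_sub_left_of_integrableOn_Icc (hint _)
    ⟨hleft.1, hleft.2.trans (ha _).2⟩ ⟨(ha _).1.trans hright.1, hright.2⟩]
  linarith [hbefore _ _ hleft, hafter _ _ hright]

/-- **Every split-cake instance admits a SANN permutation**: if each density is
nonnegative on an interval `[lᵢ, rᵢ] ⊆ [0,1]`, nonpositive outside it, and has
nonnegative total value, then some ordering of the agents makes the instance SANN. -/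
theorem split_cake_admits_sann_permutation (n : ℕ) (hn : 1 ≤ n) (f : Fin n → ℝ → ℝ)
    (hint : ∀ i, IntegrableOn (f i) (Set.Icc 0 1))
    (hsplit : ∀ i, ∃ l r : ℝ, 0 ≤ l ∧ l ≤ r ∧ r ≤ 1 ∧
      (∀ z, z ∈ Set.Ico 0 l ∪ Set.Ioc r 1 → f i z ≤ 0) ∧
      (∀ z ∈ Set.Icc l r, 0 ≤ f i z))
    (hcake : ∀ i, 0 ≤ ∫ z in (0:ℝ)..1, f i z) :
    ∃ σ : Equiv.Perm (Fin n), ∀ x : Fin n → ℝ, x ∈ stdSimplex ℝ (Fin n) →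
      ∃ i : Fin n, 0 < x i ∧
        0 ≤ ∫ z in (∑ k ∈ Finset.Iio i, x k)..(∑ k ∈ Finset.Iic i, x k), f (σ i) z :=
  split_cake_admits_sann_permutation_general n f hint hsplit hcake
end

section
/- Let n ≥ 1 and let f : Fin n → ℝ → ℝ be single-peaked densities: each f_i is integrable on [0,1], there exists p_i ∈ [0,1] such that f_i is monotone nondecreasing on [0,p_i] and monotone nonincreasing on [p_i,1], and ∫_0^1 f_i(z) dz ≥ 0. Then there exists a permutation σ of Fin n such that for every cut-set x in the standard (n−1)-simplex there is an index i with x_i > 0 and ∫_{s_{i−1}}^{s_i} f_{σ(i)}(z) dz ≥ 0, where s_k = x_1 + ⋯ + x_k; i.e., every single-peaked instance admits a SANN permutation. -/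
/-!
Write `Gᵢ t = ∫ z in 0..t, f i z`. Since `f i` is nondecreasing up to its peak and nonincreasing
after it, `Gᵢ` can never pass from a positive value to a negative one, so there is a switch point
`zᵢ ∈ [0,1]` with `Gᵢ ≤ 0` on `[0, zᵢ]` and `Gᵢ ≥ 0` on `[zᵢ, 1]`; any piece `[a, b] ∋ zᵢ` is then
worth `Gᵢ b - Gᵢ a ≥ 0` to agent `i`. Order the agents by increasing switch point. Given a cut-set,
the last nonempty piece whose left end is at most its owner's switch point also reaches that
switch point: otherwise the next nonempty piece would start before its owner's, larger, switch
point.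
-/

open MeasureTheory Finset

section MonotoneBounds

variable {f : ℝ → ℝ} {a b : ℝ}

theorem MonotoneOn.intervalIntegrable_of_le (hab : a ≤ b) (hf : MonotoneOn f (Set.Icc a b)) :
    IntervalIntegrable f volume a b :=
  MonotoneOn.intervalIntegrable (by rwa [Set.uIcc_of_le hab])

theorem AntitoneOn.intervalIntegrable_of_le (hab : a ≤ b) (hf : AntitoneOn f (Set.Icc a b)) :
    IntervalIntegrable f volume a b :=
  AntitoneOn.intervalIntegrable (by rwa [Set.uIcc_of_le hab])

theorem MonotoneOn.mul_le_intervalIntegral (hab : a ≤ b) (hf : MonotoneOn f (Set.Icc a b)) :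
    (b - a) * f a ≤ ∫ x in a..b, f x := by
  simpa using intervalIntegral.integral_mono_on hab intervalIntegrable_const
    (hf.intervalIntegrable_of_le hab)
    fun x hx => hf ⟨le_rfl, hab⟩ hx hx.1

theorem MonotoneOn.intervalIntegral_le_mul (hab : a ≤ b) (hf : MonotoneOn f (Set.Icc a b)) :
    ∫ x in a..b, f x ≤ (b - a) * f b := by
  simpa using intervalIntegral.integral_mono_on hab (hf.intervalIntegrable_of_le hab)
    intervalIntegrable_const
    fun x hx => hf hx ⟨hab, le_rfl⟩ hx.2

theorem AntitoneOn.mul_le_intervalIntegral (hab : a ≤ b) (hf : AntitoneOn f (Set.Icc a b)) :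
    (b - a) * f b ≤ ∫ x in a..b, f x := by
  simpa using intervalIntegral.integral_mono_on hab intervalIntegrable_const
    (hf.intervalIntegrable_of_le hab)
    fun x hx => hf hx ⟨hab, le_rfl⟩ hx.2

theorem AntitoneOn.intervalIntegral_le_mul (hab : a ≤ b) (hf : AntitoneOn f (Set.Icc a b)) :
    ∫ x in a..b, f x ≤ (b - a) * f a := by
  simpa using intervalIntegral.integral_mono_on hab (hf.intervalIntegrable_of_le hab)
    intervalIntegrable_const
    fun x hx => hf ⟨le_rfl, hab⟩ hx hx.1

theorem MonotoneOn.intervalIntegral_nonneg_of_pos {u t : ℝ} (hau : a ≤ u) (hut : u ≤ t)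
    (htb : t ≤ b) (hf : MonotoneOn f (Set.Icc a b)) (hpos : 0 < ∫ x in a..u, f x) :
    0 ≤ ∫ x in u..t, f x := by
  have hfu : 0 < f u := by
    have := (hf.mono (Set.Icc_subset_Icc le_rfl (hut.trans htb))).intervalIntegral_le_mul hau
    nlinarith
  have := (hf.mono (Set.Icc_subset_Icc hau htb)).mul_le_intervalIntegral hut
  nlinarith

theorem AntitoneOn.min_zero_le_intervalIntegral {t : ℝ} (hat : a ≤ t) (htb : t ≤ b)
    (hf : AntitoneOn f (Set.Icc a b)) :
    min 0 (∫ x in a..b, f x) ≤ ∫ x in a..t, f x := by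
  have hleft := (hf.mono (Set.Icc_subset_Icc le_rfl htb)).mul_le_intervalIntegral hat
  rcases le_or_gt 0 (f t) with hft | hft
  · exact (min_le_left _ _).trans (by nlinarith)
  · have hright := (hf.mono (Set.Icc_subset_Icc hat le_rfl)).intervalIntegral_le_mul htb
    rw [← intervalIntegral.integral_add_adjacent_intervals
      ((hf.mono (Set.Icc_subset_Icc le_rfl htb)).intervalIntegrable_of_le hat)
      ((hf.mono (Set.Icc_subset_Icc hat le_rfl)).intervalIntegrable_of_le htb)]
    exact (min_le_right _ _).trans (by nlinarith)

end MonotoneBounds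

theorem ContinuousOn.exists_nonpos_then_nonneg {G : ℝ → ℝ} {a b : ℝ} (hab : a ≤ b)
    (hG : ContinuousOn G (Set.Icc a b)) (ha : G a ≤ 0) (hb : 0 ≤ G b)
    (hsign : ∀ u t, a ≤ u → u ≤ t → t ≤ b → 0 < G u → 0 ≤ G t) :
    ∃ z ∈ Set.Icc a b, (∀ u ∈ Set.Icc a z, G u ≤ 0) ∧ ∀ v ∈ Set.Icc z b, 0 ≤ G v := by
  set S : Set ℝ := insert a {t | t ∈ Set.Icc a b ∧ G t < 0}
  have hSab : S ⊆ Set.Icc a b := Set.insert_subset ⟨le_rfl, hab⟩ fun t ht => ht.1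
  have hSbdd : BddAbove S := ⟨b, fun t ht => (hSab ht).2⟩
  set z := sSup S
  have hS : S.Nonempty := ⟨a, Set.mem_insert a _⟩
  have hz : z ∈ Set.Icc a b :=
    ⟨le_csSup hSbdd (Set.mem_insert a _), csSup_le hS fun t ht => (hSab ht).2⟩
  have hclosed {s : Set ℝ} (hs : IsClosed s) : IsClosed (Set.Icc a b ∩ G ⁻¹' s) :=
    hG.preimage_isClosed_of_isClosed isClosed_Icc hs
  have hGz_nonpos : G z ≤ 0 := by
    have hsub : S ⊆ Set.Icc a b ∩ G ⁻¹' Set.Iic 0 :=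
      Set.insert_subset ⟨⟨le_rfl, hab⟩, ha⟩ fun t ht => ⟨ht.1, ht.2.le⟩
    exact (closure_minimal hsub (hclosed isClosed_Iic) (csSup_mem_closure hS hSbdd)).2
  have hright : ∀ v ∈ Set.Ioc z b, 0 ≤ G v := fun v hv => not_lt.1 fun hneg =>
    hv.1.not_ge (le_csSup hSbdd (Set.mem_insert_of_mem a ⟨⟨hz.1.trans hv.1.le, hv.2⟩, hneg⟩))
  have hGz_nonneg : 0 ≤ G z := by
    rcases hz.2.eq_or_lt with hzb | hzb
    · rwa [hzb]
    · have hz_mem : z ∈ closure (Set.Ioc z b) := by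
        rw [closure_Ioc hzb.ne]
        exact Set.left_mem_Icc.2 hzb.le
      have hsub : Set.Ioc z b ⊆ Set.Icc a b ∩ G ⁻¹' Set.Ici 0 :=
        fun v hv => ⟨⟨hz.1.trans hv.1.le, hv.2⟩, hright v hv⟩
      exact (closure_minimal hsub (hclosed isClosed_Ici) hz_mem).2
  have hleft : ∀ u ∈ Set.Ico a z, G u ≤ 0 := fun u hu => not_lt.1 fun hpos => by
    obtain ⟨t, ht, hut⟩ := exists_lt_of_lt_csSup hS hu.2
    rcases ht with rfl | ⟨htab, hneg⟩
    · exact hu.1.not_gt hut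
    · exact hneg.not_ge (hsign u t hu.1 hut.le htab.2 hpos)
  refine ⟨z, hz, fun u hu => ?_, fun v hv => ?_⟩
  · rcases hu.2.eq_or_lt with rfl | huz
    exacts [hGz_nonpos, hleft u ⟨hu.1, huz⟩]
  · rcases hv.1.eq_or_lt with rfl | hzv
    exacts [hGz_nonneg, hright v ⟨hzv, hv.2⟩]

section SinglePeaked

variable {f : ℝ → ℝ} {p : ℝ}

theorem intervalIntegrable_of_singlePeaked (hp : p ∈ Set.Icc (0 : ℝ) 1)
    (hmono : MonotoneOn f (Set.Icc 0 p)) (hanti : AntitoneOn f (Set.Icc p 1)) {a b : ℝ}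
    (ha : a ∈ Set.Icc (0 : ℝ) 1) (hb : b ∈ Set.Icc (0 : ℝ) 1) :
    IntervalIntegrable f volume a b := by
  refine ((hmono.intervalIntegrable_of_le hp.1).trans
    (hanti.intervalIntegrable_of_le hp.2)).mono_set ?_
  rw [← Set.uIcc_of_le zero_le_one] at ha hb
  exact Set.uIcc_subset_uIcc ha hb

theorem intervalIntegral_nonneg_of_pos_of_singlePeaked (hp : p ∈ Set.Icc (0 : ℝ) 1)
    (hmono : MonotoneOn f (Set.Icc 0 p)) (hanti : AntitoneOn f (Set.Icc p 1))
    (htot : 0 ≤ ∫ x in 0..1, f x) {u t : ℝ} (hu : 0 ≤ u) (hut : u ≤ t) (ht : t ≤ 1)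
    (hpos : 0 < ∫ x in 0..u, f x) : 0 ≤ ∫ x in 0..t, f x := by
  have hsplit {a b : ℝ} (ha : 0 ≤ a) (hab : a ≤ b) (hb : b ≤ 1) :
      (∫ x in 0..a, f x) + ∫ x in a..b, f x = ∫ x in 0..b, f x :=
    intervalIntegral.integral_add_adjacent_intervals
      (intervalIntegrable_of_singlePeaked hp hmono hanti ⟨le_rfl, zero_le_one⟩
        ⟨ha, hab.trans hb⟩)
      (intervalIntegrable_of_singlePeaked hp hmono hanti ⟨ha, hab.trans hb⟩
        ⟨ha.trans hab, hb⟩)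
  -- after the peak the prefix integral stays above the smaller of its current and final values
  have after_peak {q : ℝ} (hpq : p ≤ q) (hqt : q ≤ t) (hq : 0 < ∫ x in 0..q, f x) :
      0 ≤ ∫ x in 0..t, f x := by
    have := (hanti.mono (Set.Icc_subset_Icc hpq le_rfl)).min_zero_le_intervalIntegral hqt ht
    have := hsplit (hp.1.trans hpq) hqt ht
    have := hsplit (hp.1.trans hpq) (hqt.trans ht) le_rfl
    rcases min_choice 0 (∫ x in q..1, f x) with h | h <;> linarith
  have before_peak {s : ℝ} (hus : u ≤ s) (hsp : s ≤ p) : 0 < ∫ x in 0..s, f x := by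
    rw [← hsplit hu hus (hsp.trans hp.2)]
    linarith [hmono.intervalIntegral_nonneg_of_pos hu hus hsp hpos]
  rcases le_total t p with htp | hpt
  · exact (before_peak hut htp).le
  rcases le_total p u with hpu | hup
  · exact after_peak hpu hut hpos
  · exact after_peak le_rfl hpt (before_peak hup le_rfl)

theorem exists_forall_intervalIntegral_nonneg_of_singlePeaked
    (hpeak : ∃ p ∈ Set.Icc (0 : ℝ) 1, MonotoneOn f (Set.Icc 0 p) ∧ AntitoneOn f (Set.Icc p 1))
    (htot : 0 ≤ ∫ x in 0..1, f x) :
    ∃ z ∈ Set.Icc (0 : ℝ) 1,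
      ∀ a b, 0 ≤ a → a ≤ z → z ≤ b → b ≤ 1 → 0 ≤ ∫ x in a..b, f x := by
  obtain ⟨p, hp, hmono, hanti⟩ := hpeak
  have hint {a : ℝ} (ha : a ∈ Set.Icc (0 : ℝ) 1) : IntervalIntegrable f volume 0 a :=
    intervalIntegrable_of_singlePeaked hp hmono hanti ⟨le_rfl, zero_le_one⟩ ha
  have hcont : ContinuousOn (fun t => ∫ x in 0..t, f x) (Set.Icc 0 1) := by
    rw [← Set.uIcc_of_le zero_le_one]
    exact intervalIntegral.continuousOn_primitive_interval' (hint ⟨zero_le_one, le_rfl⟩)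
      Set.left_mem_uIcc
  obtain ⟨z, hz, hneg, hnonneg⟩ := hcont.exists_nonpos_then_nonneg zero_le_one
    (by simp) htot fun u t hu hut ht hpos =>
      intervalIntegral_nonneg_of_pos_of_singlePeaked hp hmono hanti htot hu hut ht hpos
  refine ⟨z, hz, fun a b ha haz hzb hb => ?_⟩
  rw [← intervalIntegral.integral_interval_sub_left (hint ⟨hz.1.trans hzb, hb⟩)
    (hint ⟨ha, haz.trans hz.2⟩)]
  linarith [hneg a ⟨ha, haz⟩, hnonneg b ⟨hzb, hb⟩]

end SinglePeaked

section Pieces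

variable {ι : Type*} [LinearOrder ι] [Fintype ι] [LocallyFiniteOrderBot ι] {x : ι → ℝ}

theorem exists_pos_sum_Iio_le_lt_sum_Iic (hx : 0 ≤ x) {t : ℝ} (ht : 0 ≤ t)
    (htx : t < ∑ i, x i) : ∃ k, 0 < x k ∧ ∑ i ∈ Iio k, x i ≤ t ∧ t < ∑ i ∈ Iic k, x i := by
  set K := univ.filter fun k => t < ∑ i ∈ Iic k, x i
  have huniv : (univ : Finset ι).Nonempty := nonempty_of_sum_ne_zero (f := x) (by linarith)
  have hK : K.Nonempty := by
    refine ⟨univ.max' huniv, mem_filter.2 ⟨mem_univ _, ?_⟩⟩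
    rwa [eq_univ_of_forall fun i => mem_Iic.2 (le_max' _ i (mem_univ i))]
  set k := K.min' hK
  have hk : t < ∑ i ∈ Iic k, x i := (mem_filter.1 (K.min'_mem hK)).2
  have hIio : ∑ i ∈ Iio k, x i ≤ t := by
    rcases (Iio k).eq_empty_or_nonempty with h | h
    · simpa [h] using ht
    by_contra! hlt
    set j := (Iio k).max' h
    have hj : t < ∑ i ∈ Iic j, x i := hlt.trans_le <| sum_le_sum_of_subset_of_nonneg
      (fun i hi => mem_Iic.2 (le_max' _ i hi)) fun i _ _ => hx i
    exact (mem_Iio.1 (max'_mem _ h)).not_ge (K.min'_le j (mem_filter.2 ⟨mem_univ j, hj⟩))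
  refine ⟨k, ?_, hIio, hk⟩
  rw [← sum_Iio_add_eq_sum_Iic] at hk
  linarith

theorem exists_pos_sum_Iio_le_le_sum_Iic_of_monotone (hx : x ∈ stdSimplex ℝ ι) {c : ι → ℝ}
    (hc : Monotone c) (hc01 : ∀ i, c i ∈ Set.Icc (0 : ℝ) 1) :
    ∃ i, 0 < x i ∧ ∑ k ∈ Iio i, x k ≤ c i ∧ c i ≤ ∑ k ∈ Iic i, x k := by
  obtain ⟨hx0, hx1⟩ := hx
  set S := univ.filter fun i => 0 < x i ∧ ∑ k ∈ Iio i, x k ≤ c i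
  have hS : S.Nonempty := by
    obtain ⟨k, hk, hk0, -⟩ :=
      exists_pos_sum_Iio_le_lt_sum_Iic hx0 le_rfl (by rw [hx1]; exact one_pos)
    exact ⟨k, mem_filter.2 ⟨mem_univ k, hk, hk0.trans (hc01 k).1⟩⟩
  set i := S.max' hS
  obtain ⟨hi_pos, hi_le⟩ := (mem_filter.1 (S.max'_mem hS)).2
  refine ⟨i, hi_pos, hi_le, not_lt.1 fun hlt => ?_⟩
  -- the piece following position `i` would start before `c i ≤ c k`, against maximality of `i`
  obtain ⟨k, hk, hk_le, hk_lt⟩ := exists_pos_sum_Iio_le_lt_sum_Iic hx0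
    (sum_nonneg fun k _ => hx0 k) (hlt.trans_le ((hc01 i).2.trans hx1.ge))
  have hik : i < k := not_le.1 fun hki => hk_lt.not_ge <|
    sum_le_sum_of_subset_of_nonneg (Iic_subset_Iic.2 hki) fun j _ _ => hx0 j
  exact hik.not_ge <|
    S.le_max' k (mem_filter.2 ⟨mem_univ k, hk, hk_le.trans (hlt.le.trans (hc hik.le))⟩)

end Pieces

theorem single_peaked_admits_sann_permutation_general (n : ℕ) (f : Fin n → ℝ → ℝ)
    (hpeak : ∀ i, ∃ p ∈ Set.Icc (0:ℝ) 1,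
      MonotoneOn (f i) (Set.Icc 0 p) ∧ AntitoneOn (f i) (Set.Icc p 1))
    (hcake : ∀ i, 0 ≤ ∫ z in (0:ℝ)..1, f i z) :
    ∃ σ : Equiv.Perm (Fin n), ∀ x : Fin n → ℝ, x ∈ stdSimplex ℝ (Fin n) →
      ∃ i : Fin n, 0 < x i ∧
        0 ≤ ∫ z in (∑ k ∈ Finset.Iio i, x k)..(∑ k ∈ Finset.Iic i, x k), f (σ i) z := by
  choose z hz hpiece using fun i =>
    exists_forall_intervalIntegral_nonneg_of_singlePeaked (hpeak i) (hcake i)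
  refine ⟨Tuple.sort z, fun x hx => ?_⟩
  obtain ⟨i, hxi, hstart, hend⟩ :=
    exists_pos_sum_Iio_le_le_sum_Iic_of_monotone hx (Tuple.monotone_sort z) fun i => hz _
  exact ⟨i, hxi, hpiece _ _ _ (sum_nonneg fun k _ => hx.1 k) hstart hend
    (hx.2 ▸ sum_le_univ_sum_of_nonneg hx.1)⟩

/-- **Every single-peaked instance admits a SANN permutation**: if each density is
nondecreasing before its peak `pᵢ ∈ [0,1]` and nonincreasing after, and has nonnegative
total value, then some ordering of the agents makes the instance SANN. -/
theorem single_peaked_admits_sann_permutation (n : ℕ) (hn : 1 ≤ n) (f : Fin n → ℝ → ℝ)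
    (hint : ∀ i, IntegrableOn (f i) (Set.Icc 0 1))
    (hpeak : ∀ i, ∃ p ∈ Set.Icc (0:ℝ) 1,
      MonotoneOn (f i) (Set.Icc 0 p) ∧ AntitoneOn (f i) (Set.Icc p 1))
    (hcake : ∀ i, 0 ≤ ∫ z in (0:ℝ)..1, f i z) :
    ∃ σ : Equiv.Perm (Fin n), ∀ x : Fin n → ℝ, x ∈ stdSimplex ℝ (Fin n) →
      ∃ i : Fin n, 0 < x i ∧
        0 ≤ ∫ z in (∑ k ∈ Finset.Iio i, x k)..(∑ k ∈ Finset.Iic i, x k), f (σ i) z :=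
  single_peaked_admits_sann_permutation_general n f hpeak hcake
end

section
/- Consider three agents with densities f₁(z) = −1 on [0,1/2] and 3 on (1/2,1], f₂(z) = 1 on [0,1], and f₃(z) = 3 on [0,1/2] and −1 on (1/2,1]. Then there is no cut-set (x₁,x₂,x₃) in the standard 2-simplex for which the three values ∫_0^{x₁} f₁, ∫_{x₁}^{x₁+x₂} f₂, ∫_{x₁+x₂}^{1} f₃ are all equal; i.e., no connected equitable allocation exists in which the agents are ordered (1,2,3) from left to right. -/
/-!
Every value is a piecewise-linear function of the cuts. If agent 1's piece ends left of `1/2`,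
its value `-x₁` is nonpositive while agent 2's value `x₂` is nonnegative, which forces
`x₁ = x₂ = 0`; agent 3 then holds the whole cake, worth `1` rather than agent 2's `0`.
Otherwise agent 3's piece lies right of `1/2`, so `x₂ = -x₃ ≤ 0`, forcing `x₂ = x₃ = 0`; agent 1
then holds the whole cake, again worth `1` rather than `0`.
-/

open MeasureTheory intervalIntegral
open scoped Interval

lemma intervalIntegrable_ite_le (a b t u v : ℝ) :
    IntervalIntegrable (fun z => if z ≤ t then a else b) volume u v := by
  rcases le_total a b with hab | hab
  · exact Monotone.intervalIntegrable fun x y hxy => by split_ifs <;> linarith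
  · exact Antitone.intervalIntegrable fun x y hxy => by split_ifs <;> linarith

lemma integral_ite_le_from_threshold (a b t v : ℝ) :
    ∫ z in t..v, (if z ≤ t then a else b) = a * (min v t - t) + b * (max v t - t) := by
  rcases le_total v t with hvt | htv
  · have hconst : Set.EqOn (fun z => if z ≤ t then a else b) (fun _ => a) (Set.uIcc v t) :=
      fun z hz => if_pos (Set.uIcc_of_le hvt ▸ hz).2
    rw [integral_symm, integral_congr hconst, intervalIntegral.integral_const, min_eq_left hvt, max_eq_right hvt]
    simp only [smul_eq_mul]
    ring
  · have hconst : ∀ z ∈ Ι t v, (if z ≤ t then a else b) = b := fun z hz =>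
      if_neg (not_le.mpr (Set.uIoc_of_le htv ▸ hz).1)
    rw [integral_congr_ae (g := fun _ => b) (Filter.Eventually.of_forall hconst),
      intervalIntegral.integral_const,
      min_eq_right htv, max_eq_left htv, smul_eq_mul]
    ring

/-- The step function `a·𝟙_{z ≤ t} + b·𝟙_{z > t}` has antiderivative `a · min z t + b · max z t`. -/
lemma integral_ite_le (a b t u v : ℝ) :
    ∫ z in u..v, (if z ≤ t then a else b) =
      a * (min v t - min u t) + b * (max v t - max u t) := by
  rw [← integral_interval_sub_left (intervalIntegrable_ite_le a b t t v)
    (intervalIntegrable_ite_le a b t t u), integral_ite_le_from_threshold,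
    integral_ite_le_from_threshold]
  ring

/-- **Agent ordering matters**: for the three-agent instance with densities
`f₁ = -1` on `[0,1/2]` and `3` on `(1/2,1]`, `f₂ = 1`, and `f₃ = 3` on `[0,1/2]` and
`-1` on `(1/2,1]`, there is no connected equitable allocation in which the agents are
ordered `(1,2,3)` from left to right. -/
theorem no_equitable_in_order_123 :
    ¬ ∃ x₁ x₂ x₃ : ℝ, 0 ≤ x₁ ∧ 0 ≤ x₂ ∧ 0 ≤ x₃ ∧ x₁ + x₂ + x₃ = 1 ∧
      (∫ z in (0:ℝ)..x₁, (if z ≤ 1/2 then (-1:ℝ) else 3)) =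
        (∫ z in x₁..(x₁ + x₂), (1:ℝ)) ∧
      (∫ z in x₁..(x₁ + x₂), (1:ℝ)) =
        (∫ z in (x₁ + x₂)..(1:ℝ), (if z ≤ 1/2 then (3:ℝ) else -1)) := by
  rintro ⟨x₁, x₂, x₃, hx₁, hx₂, hx₃, hsum, h₁₂, h₂₃⟩
  have hV₂ : (∫ z in x₁..(x₁ + x₂), (1:ℝ)) = x₂ := by simp
  rw [hV₂, integral_ite_le] at h₁₂ h₂₃
  simp only [min_def, max_def] at h₁₂ h₂₃
  split_ifs at h₁₂ h₂₃ <;> linarith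
end
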